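/- arXiv:2208.06967 — 5 statements merged into one kernel-verified Lean document; each statement's English description precedes it below -/
import Mathlib

section
/- For the q×q matrix D_V(z) representing the one-dimensional discrete periodic Schrödinger operator Δ+V with Floquet boundary condition u(n+q)=z·u(n), the quantity det(D_V(z)−λI) − (−1)^{q+1}z − (−1)^{q+1}z^{-1} is independent of z ∈ ℂ\{0}. -/
/-!
After subtracting `λ`, the Floquet matrix is the Dirichlet (tridiagonal) matrix `A` plus `z` in
the corner `(q, 1)` and `z⁻¹` in the corner `(1, q)`. The determinant is affine in each entry, so
`det (A + z E_{q1} + z⁻¹ E_{1q})` is `det A`, plus `z` and `z⁻¹` times the cofactors of the two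
corner entries, plus `z z⁻¹ = 1` times a second-order cofactor. The corner cofactors of a
tridiagonal matrix with unit off-diagonals are `(-1)^(q+1)`: the minors are triangular with unit
diagonal. For `q = 1` both corners are the single entry and `P = V 1 - λ + z + z⁻¹`.
-/

noncomputable section
open Complex Polynomial Finset

def hop (q : ℕ) (z : ℂ) (i j : Fin q) : ℂ :=
  (if (j : ℕ) = (i : ℕ) + 1 then 1 else 0) +
  (if (i : ℕ) = (j : ℕ) + 1 then 1 else 0) +
  (if (i : ℕ) = 0 ∧ (j : ℕ) = q - 1 then z⁻¹ else 0) +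
  (if (j : ℕ) = 0 ∧ (i : ℕ) = q - 1 then z else 0)

/-- The q×q Floquet matrix of the 1D discrete periodic Schrödinger operator Δ+V
with boundary condition u(n+q) = z·u(n). -/
def floqMat (q : ℕ) (V : ℤ → ℂ) (z : ℂ) : Matrix (Fin q) (Fin q) ℂ :=
  Matrix.of fun i j => (if i = j then V (((i : ℕ) : ℤ) + 1) else 0) + hop q z i j

/-- P_V(z, λ) = det(D_V(z) - λ I). -/
def floqP (q : ℕ) (V : ℤ → ℂ) (z lam : ℂ) : ℂ :=
  (floqMat q V z - lam • (1 : Matrix (Fin q) (Fin q) ℂ)).det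

/-- Average [V] of a q-periodic potential over one period. -/
def avg (q : ℕ) (V : ℤ → ℂ) : ℂ := (q : ℂ)⁻¹ * ∑ j ∈ Finset.range q, V ((j : ℤ) + 1)

namespace Matrix

section

variable {n R : Type*} [DecidableEq n] [CommRing R]

theorem add_single_eq_updateRow (A : Matrix n n R) (i j : n) (c : R) :
    A + single i j c = A.updateRow i (A i + c • Pi.single j 1) := by
  ext k l
  by_cases hk : k = i
  · subst hk
    by_cases hl : l = j
    · simp [hl]
    · simp [hl, Ne.symm hl]
  · simp [hk, Ne.symm hk]

variable [Fintype n]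

theorem det_add_single (A : Matrix n n R) (i j : n) (c : R) :
    (A + single i j c).det = A.det + c * adjugate A j i := by
  rw [add_single_eq_updateRow, det_updateRow_add, updateRow_eq_self, det_updateRow_smul,
    adjugate_apply]

theorem det_add_single_add_single (A : Matrix n n R) {i j : n} (hij : i ≠ j) (a b : R) :
    (A + single i j a + single j i b).det =
      A.det + a * adjugate A j i + b * adjugate A i j +
        a * b * adjugate (A.updateRow j (Pi.single i 1)) j i := by
  have hrow : (A + single i j a).updateRow j (Pi.single i 1) =
      A.updateRow j (Pi.single i 1) + single i j a := by
    rw [add_single_eq_updateRow, add_single_eq_updateRow, updateRow_comm _ hij.symm]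
    simp [updateRow_ne hij]
  rw [det_add_single, det_add_single, adjugate_apply (A + _), hrow, det_add_single,
    ← adjugate_apply]
  ring

end

variable {R : Type*} [CommRing R] {m : ℕ}

theorem adjugate_zero_last_of_superdiag (A : Matrix (Fin (m + 2)) (Fin (m + 2)) R)
    (hsup : ∀ i : Fin (m + 1), A i.castSucc i.succ = 1)
    (hzero : ∀ i j : Fin (m + 2), (i : ℕ) + 1 < j → A i j = 0) :
    adjugate A 0 (Fin.last (m + 1)) = (-1) ^ (m + 1) := by
  have hminor : (A.submatrix Fin.castSucc Fin.succ).det = 1 := by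
    rw [det_of_isLowerTriangular _ fun i j hij =>
      hzero i.castSucc j.succ (by simpa using hij)]
    exact Finset.prod_eq_one fun i _ => hsup i
  simp_rw [adjugate_apply, det_succ_row _ (Fin.last (m + 1)), submatrix_updateRow_succAbove]
  simp [Fin.sum_univ_succ, hminor]

theorem adjugate_last_zero_of_subdiag (A : Matrix (Fin (m + 2)) (Fin (m + 2)) R)
    (hsub : ∀ i : Fin (m + 1), A i.succ i.castSucc = 1)
    (hzero : ∀ i j : Fin (m + 2), (j : ℕ) + 1 < i → A i j = 0) :
    adjugate A (Fin.last (m + 1)) 0 = (-1) ^ (m + 1) := by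
  rw [← transpose_apply (adjugate A), adjugate_transpose]
  exact adjugate_zero_last_of_superdiag Aᵀ hsub fun i j h => hzero j i h

end Matrix

def dirichletMat (n : ℕ) (V : ℤ → ℂ) (lam : ℂ) : Matrix (Fin n) (Fin n) ℂ :=
  Matrix.of fun i j =>
    (if i = j then V (((i : ℕ) : ℤ) + 1) - lam else 0) +
    (if (j : ℕ) = (i : ℕ) + 1 then 1 else 0) +
    (if (i : ℕ) = (j : ℕ) + 1 then 1 else 0)

theorem floqMat_sub_smul_one (m : ℕ) (V : ℤ → ℂ) (z lam : ℂ) :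
    floqMat (m + 2) V z - lam • 1 =
      dirichletMat (m + 2) V lam + Matrix.single (Fin.last (m + 1)) 0 z +
        Matrix.single 0 (Fin.last (m + 1)) z⁻¹ := by
  ext i j
  simp only [floqMat, hop, dirichletMat, Matrix.sub_apply, Matrix.add_apply, Matrix.smul_apply,
    Matrix.one_apply, Matrix.of_apply, Matrix.single_apply, Fin.ext_iff, Fin.val_last,
    Fin.val_zero, smul_eq_mul]
  split_ifs <;> first | omega | ring

theorem adjugate_dirichletMat_zero_last (m : ℕ) (V : ℤ → ℂ) (lam : ℂ) :
    (dirichletMat (m + 2) V lam).adjugate 0 (Fin.last (m + 1)) = (-1) ^ (m + 1) := by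
  refine Matrix.adjugate_zero_last_of_superdiag _ (fun i => ?_) fun i j hij => ?_ <;>
    simp only [dirichletMat, Matrix.of_apply, Fin.ext_iff, Fin.val_castSucc, Fin.val_succ] <;>
    split_ifs <;> first | omega | ring

theorem adjugate_dirichletMat_last_zero (m : ℕ) (V : ℤ → ℂ) (lam : ℂ) :
    (dirichletMat (m + 2) V lam).adjugate (Fin.last (m + 1)) 0 = (-1) ^ (m + 1) := by
  refine Matrix.adjugate_last_zero_of_subdiag _ (fun i => ?_) fun i j hij => ?_ <;>
    simp only [dirichletMat, Matrix.of_apply, Fin.ext_iff, Fin.val_castSucc, Fin.val_succ] <;>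
    split_ifs <;> first | omega | ring

theorem floqP_add_two (m : ℕ) (V : ℤ → ℂ) {z : ℂ} (hz : z ≠ 0) (lam : ℂ) :
    floqP (m + 2) V z lam =
      (dirichletMat (m + 2) V lam).det +
        ((dirichletMat (m + 2) V lam).updateRow 0 (Pi.single (Fin.last (m + 1)) 1)).adjugate
          0 (Fin.last (m + 1)) +
        (-1) ^ (m + 1) * (z + z⁻¹) := by
  rw [floqP, floqMat_sub_smul_one, Matrix.det_add_single_add_single _ (Fin.last_pos.ne'),
    adjugate_dirichletMat_zero_last, adjugate_dirichletMat_last_zero, mul_inv_cancel₀ hz]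
  ring

theorem floqP_one (V : ℤ → ℂ) (z lam : ℂ) : floqP 1 V z lam = V 1 - lam + z + z⁻¹ := by
  rw [floqP, Matrix.det_unique]
  simp only [floqMat, hop, Matrix.sub_apply, Matrix.of_apply, Matrix.smul_apply,
    Matrix.one_apply_eq, smul_eq_mul, mul_one, Fin.default_eq_zero, Fin.val_zero, if_pos,
    Nat.cast_zero, zero_add, zero_ne_one, if_false, Nat.sub_self, and_self]
  ring

theorem stmt_0_general (q : ℕ) (hq : 1 ≤ q) (V : ℤ → ℂ)
    (z w : ℂ) (hz : z ≠ 0) (hw : w ≠ 0) (lam : ℂ) :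
    floqP q V z lam - (-1 : ℂ) ^ (q + 1) * z - (-1 : ℂ) ^ (q + 1) * z⁻¹ =
      floqP q V w lam - (-1 : ℂ) ^ (q + 1) * w - (-1 : ℂ) ^ (q + 1) * w⁻¹ := by
  obtain ⟨m, rfl⟩ | rfl : (∃ m, q = m + 2) ∨ q = 1 :=
    (Nat.lt_or_eq_of_le hq).imp (fun h => ⟨q - 2, by omega⟩) Eq.symm
  · rw [floqP_add_two m V hz, floqP_add_two m V hw]
    ring
  · rw [floqP_one, floqP_one]
    ring

/-- det(D_V(z) − λI) − (−1)^{q+1}z − (−1)^{q+1}z⁻¹ is independent of z ∈ ℂ\{0}. -/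
theorem stmt_0 (q : ℕ) (hq : 1 ≤ q) (V : ℤ → ℂ) (hV : ∀ n : ℤ, V (n + q) = V n)
    (z w : ℂ) (hz : z ≠ 0) (hw : w ≠ 0) (lam : ℂ) :
    floqP q V z lam - (-1 : ℂ) ^ (q + 1) * z - (-1 : ℂ) ^ (q + 1) * z⁻¹ =
      floqP q V w lam - (-1 : ℂ) ^ (q + 1) * w - (-1 : ℂ) ^ (q + 1) * w⁻¹ :=
  stmt_0_general q hq V z w hz hw lam
end
end

section
/- If X, Y: ℤ → ℂ are q-periodic potentials that are Floquet isospectral, then [X] = [Y], i.e., the averages of X and Y over a period coincide. -/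
noncomputable section
open Complex Polynomial Finset

/-!
Up to the sign `(-1)^q`, `λ ↦ det (D_V(1) - λ I)` is the characteristic polynomial of `D_V(1)`,
so isospectrality on the single fibre `z = 1` already gives `D_X(1)` and `D_Y(1)` the same
characteristic polynomial, hence the same trace. The trace of `D_V(1)` is `∑ V(j)` plus a
contribution of the hopping terms that does not depend on `V`.
-/

namespace Matrix

variable {R n : Type*} [CommRing R] [Fintype n] [DecidableEq n]

theorem eval_charpoly_eq_neg_one_pow_mul_det_sub_smul (M : Matrix n n R) (t : R) :
    M.charpoly.eval t = (-1) ^ Fintype.card n * (M - t • (1 : Matrix n n R)).det := by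
  rw [eval_charpoly, ← det_neg, neg_sub, smul_one_eq_diagonal, scalar_apply]

theorem charpoly_eq_of_det_sub_smul_eq [IsDomain R] [Infinite R] {M N : Matrix n n R}
    (h : ∀ t : R, (M - t • (1 : Matrix n n R)).det = (N - t • (1 : Matrix n n R)).det) :
    M.charpoly = N.charpoly :=
  Polynomial.funext fun t => by
    rw [eval_charpoly_eq_neg_one_pow_mul_det_sub_smul,
      eval_charpoly_eq_neg_one_pow_mul_det_sub_smul, h]

theorem trace_eq_of_charpoly_eq {M N : Matrix n n R} (h : M.charpoly = N.charpoly) :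
    M.trace = N.trace := by
  cases isEmpty_or_nonempty n
  · simp [trace]
  · rw [trace_eq_neg_charpoly_coeff, trace_eq_neg_charpoly_coeff, h]

end Matrix

theorem trace_floqMat (q : ℕ) (V : ℤ → ℂ) (z : ℂ) :
    (floqMat q V z).trace = ∑ j ∈ range q, V ((j : ℤ) + 1) + ∑ i, hop q z i i := by
  simp [Matrix.trace, floqMat, sum_add_distrib,
    Fin.sum_univ_eq_sum_range (fun j => V ((j : ℤ) + 1))]

theorem stmt_3_general (q : ℕ) (X Y : ℤ → ℂ)
    (hiso : ∀ z : ℂ, z ≠ 0 → ∀ lam : ℂ, floqP q X z lam = floqP q Y z lam) :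
    avg q X = avg q Y := by
  have htrace := Matrix.trace_eq_of_charpoly_eq
    (Matrix.charpoly_eq_of_det_sub_smul_eq (hiso 1 one_ne_zero))
  rw [trace_floqMat, trace_floqMat] at htrace
  rw [avg, avg, add_right_cancel htrace]

/-- Floquet isospectral potentials have the same average. -/
theorem stmt_3 (q : ℕ) (hq : 1 ≤ q) (X Y : ℤ → ℂ)
    (hX : ∀ n : ℤ, X (n + q) = X n) (hY : ∀ n : ℤ, Y (n + q) = Y n)
    (hiso : ∀ z : ℂ, z ≠ 0 → ∀ lam : ℂ, floqP q X z lam = floqP q Y z lam) :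
    avg q X = avg q Y :=
  stmt_3_general q X Y hiso
end
end

section
/- Let V, Ṽ: ℤ → ℂ be q-periodic with [V] = [Ṽ], and suppose V and Ṽ are not Floquet isospectral. Fix the branches λ_V^l, λ_Ṽ^l of eigenvalues of D_V(z^q), D_Ṽ(z^q) with asymptotics λ^l(z) = e^{2πil/q}z + [V] + O(1/z). Then there exist R > 0 and ε > 0 such that for every η ∈ ℂ with 0 < |η| < ε and every l ∈ {0,1,...,q−1}, the equation λ_V^l(z) = λ_Ṽ^l(z) + η has at least one solution z with |z| ≥ R. -/
/-!
Since `[V] = [Ṽ]`, each difference `D_l = λ_V^l - λ_Ṽ^l` tends to `0` at infinity, so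
`w ↦ D_l (1 / w)` has a removable singularity at `0`; by the open mapping theorem it covers a
punctured neighbourhood of `0` unless it vanishes identically near `0`. As `(ζ z)^q = z^q` for
`ζ = e^{2πi/q}`, the substitution `z ↦ ζ z` permutes the branches, and their asymptotics force
`λ^l(ζ z) = λ^{l+1}(z)`. Hence if one `D_l` vanished near infinity, all would, the
characteristic polynomials `P_V(w, ·)` and `P_Ṽ(w, ·)` would agree for large `|w|`, and, being
analytic in `w` on `ℂ \ {0}`, they would agree everywhere.
-/

noncomputable section
open Complex Polynomial Finset

open Filter Topology Bornology

theorem AnalyticOnNhd.matrix_det {𝕜 E n : Type*} [NontriviallyNormedField 𝕜]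
    [NormedAddCommGroup E] [NormedSpace 𝕜 E] [Fintype n] [DecidableEq n]
    {s : Set E} {M : E → Matrix n n 𝕜} (hM : ∀ i j, AnalyticOnNhd 𝕜 (fun w => M w i j) s) :
    AnalyticOnNhd 𝕜 (fun w => (M w).det) s := by
  simp only [Matrix.det_apply, Units.smul_def, zsmul_eq_mul]
  exact Finset.analyticOnNhd_fun_sum _ fun σ _ => analyticOnNhd_const.mul
    (Finset.analyticOnNhd_fun_prod _ fun i _ => hM (σ i) i)

theorem analyticOnNhd_floqP (q : ℕ) (V : ℤ → ℂ) (mu : ℂ) :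
    AnalyticOnNhd ℂ (fun w => floqP q V w mu) {0}ᶜ := by
  refine AnalyticOnNhd.matrix_det fun i j =>
    DifferentiableOn.analyticOnNhd ?_ isOpen_compl_singleton
  simp only [floqMat, hop, Matrix.sub_apply, Matrix.of_apply]
  split_ifs <;> fun_prop

theorem AnalyticOnNhd.eqOn_compl_zero_of_eventuallyEq_cobounded {f g : ℂ → ℂ}
    (hf : AnalyticOnNhd ℂ f {0}ᶜ) (hg : AnalyticOnNhd ℂ g {0}ᶜ) (hfg : f =ᶠ[cobounded ℂ] g) :
    Set.EqOn f g {0}ᶜ := by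
  obtain ⟨R, -, hR⟩ := hasBasis_cobounded_norm.eventually_iff.1 hfg
  obtain ⟨z₀, hz₀R, hz₀⟩ := (((tendsto_norm_cobounded_atTop (E := ℂ)).eventually_gt_atTop R).and
    (tendsto_norm_cobounded_atTop.eventually_gt_atTop 0)).exists
  refine hf.eqOn_of_preconnected_of_eventuallyEq hg
    (isConnected_compl_singleton_of_one_lt_rank (by simp) 0).isPreconnected
    (norm_pos_iff.1 hz₀) ?_
  filter_upwards [(isOpen_lt continuous_const continuous_norm).mem_nhds
    (show z₀ ∈ {z : ℂ | R < ‖z‖} from hz₀R)] with z hz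
  exact hR (le_of_lt hz)

theorem eventually_cobounded_of_eventually_pow {p : ℂ → Prop} {q : ℕ} (hq : q ≠ 0)
    (h : ∀ᶠ z in cobounded ℂ, p (z ^ q)) : ∀ᶠ w in cobounded ℂ, p w := by
  have hroot : Tendsto (fun w : ℂ => w ^ (q⁻¹ : ℂ)) (cobounded ℂ) (cobounded ℂ) := by
    rw [← tendsto_norm_atTop_iff_cobounded]
    simp only [norm_cpow_inv_nat]
    exact (tendsto_rpow_atTop (by positivity)).comp tendsto_norm_cobounded_atTop
  exact (hroot.eventually h).mono fun w hw => by rwa [cpow_nat_inv_pow w hq] at hw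

theorem analyticAt_update_inv_zero {f : ℂ → ℂ} {a : ℂ}
    (hd : ∀ᶠ z in cobounded ℂ, DifferentiableAt ℂ f z) (hf : Tendsto f (cobounded ℂ) (𝓝 a)) :
    AnalyticAt ℂ (Function.update (fun w => f w⁻¹) 0 a) 0 := by
  refine Complex.analyticAt_of_differentiable_on_punctured_nhds_of_continuousAt ?_
    (continuousAt_update_same.2 (hf.comp tendsto_inv₀_nhdsNE_zero))
  filter_upwards [tendsto_inv₀_nhdsNE_zero.eventually hd, self_mem_nhdsWithin] with w hw hw0
  have hupd : Function.update (fun w => f w⁻¹) 0 a =ᶠ[𝓝 w] fun w => f w⁻¹ := by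
    filter_upwards [isOpen_compl_singleton.mem_nhds hw0] with u hu
    exact Function.update_of_ne hu _ _
  exact (hw.comp w (differentiableAt_inv hw0)).congr_of_eventuallyEq hupd

theorem nhdsNE_le_map_cobounded {f : ℂ → ℂ} {a : ℂ}
    (hd : ∀ᶠ z in cobounded ℂ, DifferentiableAt ℂ f z) (hf : Tendsto f (cobounded ℂ) (𝓝 a))
    (hne : ¬ ∀ᶠ z in cobounded ℂ, f z = a) : 𝓝[≠] a ≤ map f (cobounded ℂ) := by
  set g := Function.update (fun w => f w⁻¹) 0 a
  have hg0 : g 0 = a := Function.update_self _ _ _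
  have hmap : map f (cobounded ℂ) = map g (𝓝[≠] 0) := by
    rw [← inv_nhdsNE_zero, ← Filter.map_inv, Filter.map_map]
    refine Filter.map_congr ?_
    filter_upwards [self_mem_nhdsWithin] with w hw
    exact (Function.update_of_ne hw _ _).symm
  rcases (analyticAt_update_inv_zero hd hf).eventually_constant_or_nhds_le_map_nhds with
    hconst | hopen
  · refine absurd ?_ hne
    rw [← Filter.eventually_map (P := (· = a)), hmap, Filter.eventually_map, ← hg0]
    exact eventually_nhdsWithin_of_eventually_nhds hconst
  · rw [hmap]
    calc 𝓝[≠] a ≤ map g (𝓝 0) ⊓ 𝓟 {a}ᶜ := inf_le_inf_right _ (hg0 ▸ hopen)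
      _ = (map g (𝓝[≠] 0) ⊔ pure a) ⊓ 𝓟 {a}ᶜ := by
        rw [← nhdsNE_sup_pure, Filter.map_sup, Filter.map_pure, hg0]
      _ ≤ map g (𝓝[≠] 0) := by
        rw [inf_sup_right]
        exact sup_le inf_le_left ((inf_principal_eq_bot.2 (by simp)).trans_le bot_le)

theorem exists_eq_of_prod_sub_eq {R ι : Type*} [CommRing R] [IsDomain R] [Fintype ι]
    {a b : ι → R} (h : ∀ μ, ∏ i, (a i - μ) = ∏ i, (b i - μ)) (i : ι) : ∃ j, b i = a j := by
  have hzero : ∏ j, (a j - b i) = 0 := by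
    rw [h]; exact prod_eq_zero (mem_univ i) (sub_self _)
  obtain ⟨j, -, hj⟩ := prod_eq_zero_iff.1 hzero
  exact ⟨j, (sub_eq_zero.1 hj).symm⟩

section Branches

variable {q : ℕ} {ζ : ℂ}

theorem IsPrimitiveRoot.eventually_lt_norm_sub_pow_mul (hζ : IsPrimitiveRoot ζ q) (C : ℝ) :
    ∀ᶠ z in cobounded ℂ, ∀ a b : Fin q, a ≠ b → C < ‖(ζ ^ (a : ℕ) - ζ ^ (b : ℕ)) * z‖ := by
  refine eventually_all.2 fun a => eventually_all.2 fun b => ?_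
  by_cases hab : a = b
  · exact Eventually.of_forall fun _ h => absurd hab h
  have hpos : 0 < ‖ζ ^ (a : ℕ) - ζ ^ (b : ℕ)‖ :=
    norm_pos_iff.2 (sub_ne_zero.2 fun h => hab (Fin.ext (hζ.pow_inj a.isLt b.isLt h)))
  filter_upwards [tendsto_norm_cobounded_atTop.eventually_gt_atTop
    (C / ‖ζ ^ (a : ℕ) - ζ ^ (b : ℕ)‖)] with z hz _
  rw [norm_mul]
  exact (div_lt_iff₀' hpos).1 hz

variable [NeZero q]

theorem IsPrimitiveRoot.pow_val_add_one (hζ : IsPrimitiveRoot ζ q) (l : Fin q) :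
    ζ ^ ((l + 1 : Fin q) : ℕ) = ζ ^ (l : ℕ) * ζ := by
  rw [Fin.val_add, Fin.val_one', ← pow_eq_pow_mod _ hζ.pow_eq_one, pow_add,
    ← pow_eq_pow_mod _ hζ.pow_eq_one, pow_one]

theorem eventually_branch_rotate (hζ : IsPrimitiveRoot ζ q) {P : ℂ → ℂ → ℂ}
    {lam : Fin q → ℂ → ℂ} {c : ℂ}
    (hprod : ∀ᶠ z in cobounded ℂ, ∀ μ, P (z ^ q) μ = ∏ l, (lam l z - μ))
    (hasym : ∀ l, Tendsto (fun z => lam l z - (ζ ^ (l : ℕ) * z + c)) (cobounded ℂ) (𝓝 0)) :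
    ∀ᶠ z in cobounded ℂ, ∀ l, lam l (ζ * z) = lam (l + 1) z := by
  have hmul := tendsto_mul_left_cobounded (hζ.ne_zero (NeZero.ne q))
  have hnear : ∀ᶠ z in cobounded ℂ, ∀ l, ‖lam l z - (ζ ^ (l : ℕ) * z + c)‖ < 1 :=
    eventually_all.2 fun l => by simpa using (hasym l).norm.eventually (gt_mem_nhds (by norm_num))
  filter_upwards [hprod, hmul.eventually hprod, hnear, hmul.eventually hnear,
    hζ.eventually_lt_norm_sub_pow_mul 2] with z hP hPζ hz hζz hsep l
  have hζq : (ζ * z) ^ q = z ^ q := by rw [mul_pow, hζ.pow_eq_one, one_mul]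
  obtain ⟨k, hk⟩ := exists_eq_of_prod_sub_eq (a := (lam · z)) (b := (lam · (ζ * z)))
    (fun μ => by rw [← hP, ← hPζ, hζq]) l
  rw [hk]
  by_contra hne
  have hsplit : (ζ ^ ((l + 1 : Fin q) : ℕ) - ζ ^ (k : ℕ)) * z =
      (lam k z - (ζ ^ (k : ℕ) * z + c)) - (lam l (ζ * z) - (ζ ^ (l : ℕ) * (ζ * z) + c)) := by
    rw [hζ.pow_val_add_one, hk]; ring
  have := hsep (l + 1) k (fun h => hne (h ▸ rfl))
  rw [hsplit] at this
  linarith [norm_sub_le (lam k z - (ζ ^ (k : ℕ) * z + c))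
    (lam l (ζ * z) - (ζ ^ (l : ℕ) * (ζ * z) + c)), hz k, hζz l]

open Fin.NatCast in
theorem eventually_forall_eq_zero_of_rotate (hζ : ζ ≠ 0) {G : Fin q → ℂ → ℂ}
    (hrot : ∀ᶠ z in cobounded ℂ, ∀ l, G l (ζ * z) = G (l + 1) z) {l : Fin q}
    (hl : ∀ᶠ z in cobounded ℂ, G l z = 0) : ∀ᶠ z in cobounded ℂ, ∀ l', G l' z = 0 := by
  have hstep (m : ℕ) : ∀ᶠ z in cobounded ℂ, G (l + m) z = 0 := by
    induction m with
    | zero => simpa using hl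
    | succ m ih =>
      filter_upwards [hrot, (tendsto_mul_left_cobounded hζ).eventually ih] with z hz hζz
      rwa [Nat.cast_succ, ← add_assoc, ← hz]
  refine eventually_all.2 fun l' => ?_
  simpa using hstep (l' - l : Fin q)

end Branches

theorem floqP_eq_of_eventually_branches_eq {q : ℕ} (hq : q ≠ 0) {V W : ℤ → ℂ}
    {lamV lamW : Fin q → ℂ → ℂ}
    (hprodV : ∀ᶠ z in cobounded ℂ, ∀ μ, floqP q V (z ^ q) μ = ∏ l, (lamV l z - μ))
    (hprodW : ∀ᶠ z in cobounded ℂ, ∀ μ, floqP q W (z ^ q) μ = ∏ l, (lamW l z - μ))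
    (heq : ∀ᶠ z in cobounded ℂ, ∀ l, lamV l z = lamW l z) {w : ℂ} (hw : w ≠ 0) (μ : ℂ) :
    floqP q V w μ = floqP q W w μ := by
  refine (analyticOnNhd_floqP q V μ).eqOn_compl_zero_of_eventuallyEq_cobounded
    (analyticOnNhd_floqP q W μ) (eventually_cobounded_of_eventually_pow hq ?_) hw
  filter_upwards [hprodV, hprodW, heq] with z hV hW hVW
  simp only [hV, hW, hVW]

open Filter in
theorem stmt_5_general (q : ℕ) (hq : 1 ≤ q) (V W : ℤ → ℂ)
    (havg : avg q V = avg q W)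
    (hniso : ¬ (∀ z : ℂ, z ≠ 0 → ∀ lam : ℂ, floqP q V z lam = floqP q W z lam))
    (R₀ : ℝ) (lamV lamW : Fin q → ℂ → ℂ)
    (hprodV : ∀ z : ℂ, R₀ < ‖z‖ → ∀ mu : ℂ,
      floqP q V (z ^ q) mu = ∏ l : Fin q, (lamV l z - mu))
    (hprodW : ∀ z : ℂ, R₀ < ‖z‖ → ∀ mu : ℂ,
      floqP q W (z ^ q) mu = ∏ l : Fin q, (lamW l z - mu))
    (hanV : ∀ l : Fin q, AnalyticOnNhd ℂ (lamV l) {z : ℂ | R₀ < ‖z‖})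
    (hanW : ∀ l : Fin q, AnalyticOnNhd ℂ (lamW l) {z : ℂ | R₀ < ‖z‖})
    (hasymV : ∀ l : Fin q, Tendsto
      (fun z : ℂ => lamV l z - (Complex.exp (2 * Real.pi * Complex.I * (l : ℕ) / q) * z + avg q V))
      (comap (fun z : ℂ => ‖z‖) atTop) (nhds 0))
    (hasymW : ∀ l : Fin q, Tendsto
      (fun z : ℂ => lamW l z - (Complex.exp (2 * Real.pi * Complex.I * (l : ℕ) / q) * z + avg q W))
      (comap (fun z : ℂ => ‖z‖) atTop) (nhds 0)) :
    ∃ R : ℝ, 0 < R ∧ ∃ ε : ℝ, 0 < ε ∧ ∀ η : ℂ, 0 < ‖η‖ → ‖η‖ < ε →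
      ∀ l : Fin q, ∃ z : ℂ, R ≤ ‖z‖ ∧ lamV l z = lamW l z + η := by
  have : NeZero q := NeZero.of_pos hq
  set ζ : ℂ := exp (2 * Real.pi * I / q)
  have hζ : IsPrimitiveRoot ζ q := isPrimitiveRoot_exp q (NeZero.ne q)
  have hexp (l : Fin q) : exp (2 * Real.pi * I * (l : ℕ) / q) = ζ ^ (l : ℕ) := by
    rw [← exp_nat_mul]; ring_nf
  simp only [comap_norm_atTop, hexp] at hasymV hasymW
  have hlarge : ∀ᶠ z in cobounded ℂ, R₀ < ‖z‖ :=
    tendsto_norm_cobounded_atTop.eventually_gt_atTop R₀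
  set D : Fin q → ℂ → ℂ := fun l z => lamV l z - lamW l z
  have hDrot : ∀ᶠ z in cobounded ℂ, ∀ l, D l (ζ * z) = D (l + 1) z := by
    filter_upwards [eventually_branch_rotate hζ (hlarge.mono hprodV) hasymV,
      eventually_branch_rotate hζ (hlarge.mono hprodW) hasymW] with z hV hW l
    simp only [D, hV, hW]
  have hDne (l : Fin q) : ¬ ∀ᶠ z in cobounded ℂ, D l z = 0 := fun hl => by
    have hD := eventually_forall_eq_zero_of_rotate (hζ.ne_zero (NeZero.ne q)) hDrot hl
    exact hniso fun w hw μ => floqP_eq_of_eventually_branches_eq (NeZero.ne q)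
      (hlarge.mono hprodV) (hlarge.mono hprodW) (hD.mono fun z hz l => sub_eq_zero.1 (hz l)) hw μ
  have hsol : ∀ᶠ η in 𝓝[≠] 0, ∀ l, η ∈ D l '' {z | 1 ≤ ‖z‖} := eventually_all.2 fun l =>
    nhdsNE_le_map_cobounded
      (hlarge.mono fun z hz => ((hanV l z hz).sub (hanW l z hz)).differentiableAt)
      (show Tendsto (fun z => lamV l z - lamW l z) _ _ by
        simpa [havg] using (hasymV l).sub (hasymW l)) (hDne l)
      (image_mem_map (tendsto_norm_cobounded_atTop.eventually_ge_atTop 1))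
  obtain ⟨ε, hε, hsolε⟩ := Metric.eventually_nhds_iff.1 (eventually_nhdsWithin_iff.1 hsol)
  refine ⟨1, one_pos, ε, hε, fun η hη hηε l => ?_⟩
  obtain ⟨z, hz, hDz⟩ := hsolε (by simpa using hηε) (norm_pos_iff.1 hη) l
  exact ⟨z, hz, by rw [← hDz]; exact (add_sub_cancel _ _).symm⟩

open Filter in
/-- Lemma 3.2: if [V] = [Ṽ] and V, Ṽ are not Floquet isospectral, then for all
sufficiently small η ≠ 0 and every l, the equation λ_V^l(z) = λ_Ṽ^l(z) + η has a solution
with |z| ≥ R. The branches are given as hypotheses: analytic factorizations of the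
characteristic polynomials of D_V(z^q), D_Ṽ(z^q) with asymptotics e^{2πil/q}z + [V] + o(1). -/
theorem stmt_5 (q : ℕ) (hq : 1 ≤ q) (V W : ℤ → ℂ)
    (hV : ∀ n : ℤ, V (n + q) = V n) (hW : ∀ n : ℤ, W (n + q) = W n)
    (havg : avg q V = avg q W)
    (hniso : ¬ (∀ z : ℂ, z ≠ 0 → ∀ lam : ℂ, floqP q V z lam = floqP q W z lam))
    (R₀ : ℝ) (hR₀ : 0 < R₀) (lamV lamW : Fin q → ℂ → ℂ)
    (hprodV : ∀ z : ℂ, R₀ < ‖z‖ → ∀ mu : ℂ,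
      floqP q V (z ^ q) mu = ∏ l : Fin q, (lamV l z - mu))
    (hprodW : ∀ z : ℂ, R₀ < ‖z‖ → ∀ mu : ℂ,
      floqP q W (z ^ q) mu = ∏ l : Fin q, (lamW l z - mu))
    (hanV : ∀ l : Fin q, AnalyticOnNhd ℂ (lamV l) {z : ℂ | R₀ < ‖z‖})
    (hanW : ∀ l : Fin q, AnalyticOnNhd ℂ (lamW l) {z : ℂ | R₀ < ‖z‖})
    (hasymV : ∀ l : Fin q, Tendsto
      (fun z : ℂ => lamV l z - (Complex.exp (2 * Real.pi * Complex.I * (l : ℕ) / q) * z + avg q V))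
      (comap (fun z : ℂ => ‖z‖) atTop) (nhds 0))
    (hasymW : ∀ l : Fin q, Tendsto
      (fun z : ℂ => lamW l z - (Complex.exp (2 * Real.pi * Complex.I * (l : ℕ) / q) * z + avg q W))
      (comap (fun z : ℂ => ‖z‖) atTop) (nhds 0)) :
    ∃ R : ℝ, 0 < R ∧ ∃ ε : ℝ, 0 < ε ∧ ∀ η : ℂ, 0 < ‖η‖ → ‖η‖ < ε →
      ∀ l : Fin q, ∃ z : ℂ, R ≤ ‖z‖ ∧ lamV l z = lamW l z + η :=
  stmt_5_general q hq V W havg hniso R₀ lamV lamW hprodV hprodW hanV hanW hasymV hasymW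
end
end

section
/- Let q₁, q₂ be coprime positive integers and let V: ℤ² → ℂ be (q₁ℤ ⊕ q₂ℤ)-periodic and separable, V(n₁,n₂) = V₁(n₁) + V₂(n₂) with V₁ q₁-periodic and V₂ q₂-periodic. Then for all z₁ ∈ ℂ\{0}, z₂ ∈ ℂ with |z₂| sufficiently large, and λ ∈ ℂ: P_V(z₁, z₂^{q₂}, λ) = ∏_{l=0}^{q₂−1} P_{V₁}(z₁, λ − λ_{V₂}^l(z₂)), where P_{V₁}(z₁, μ) = det(D_{V₁}(z₁) − μI) and λ_{V₂}^l are the analytic eigenvalue branches of D_{V₂}(z₂^{q₂}). -/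
noncomputable section
open Complex Polynomial Finset

/-- The q₁q₂ × q₁q₂ Floquet matrix of the 2D discrete periodic Schrödinger operator Δ+V
with boundary conditions u(n + qⱼeⱼ) = zⱼ·u(n). -/
def floqMat2 (q₁ q₂ : ℕ) (V : ℤ × ℤ → ℂ) (z₁ z₂ : ℂ) :
    Matrix (Fin q₁ × Fin q₂) (Fin q₁ × Fin q₂) ℂ :=
  Matrix.of fun p r =>
    (if p = r then V (((p.1 : ℕ) : ℤ) + 1, ((p.2 : ℕ) : ℤ) + 1) else 0) +
    (if p.2 = r.2 then hop q₁ z₁ p.1 r.1 else 0) +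
    (if p.1 = r.1 then hop q₂ z₂ p.2 r.2 else 0)

/-- P_V(z₁, z₂, λ) = det(D_V(z₁,z₂) - λ I). -/
def floqP2 (q₁ q₂ : ℕ) (V : ℤ × ℤ → ℂ) (z₁ z₂ lam : ℂ) : ℂ :=
  (floqMat2 q₁ q₂ V z₁ z₂ - lam • (1 : Matrix (Fin q₁ × Fin q₂) (Fin q₁ × Fin q₂) ℂ)).det

/-- Average of a 2D periodic potential over the fundamental domain. -/
def avg2 (q₁ q₂ : ℕ) (V : ℤ × ℤ → ℂ) : ℂ :=
  ((q₁ : ℂ) * q₂)⁻¹ * ∑ i ∈ Finset.range q₁, ∑ j ∈ Finset.range q₂, V ((i : ℤ) + 1, (j : ℤ) + 1)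

/-!
For separable `V` the Floquet matrix is the Kronecker sum `D_{V₁}(z₁) ⊗ 1 + 1 ⊗ D_{V₂}(z₂^{q₂})`.
Triangularizing the second factor, `D_{V₂} U = U T`, conjugates this sum by `1 ⊗ U` into a matrix
that is block upper triangular in the second coordinate, with diagonal blocks `D_{V₁}(z₁) + T_{ll}`.
Hence `P_V(z₁, z₂^{q₂}, λ) = ∏_l P_{V₁}(z₁, λ - T_{ll})`, and the diagonal entries `T_{ll}` are the
roots of the characteristic polynomial of `D_{V₂}(z₂^{q₂})`, which the branch hypothesis identifies
with the values `λ_{V₂}^l(z₂)`.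
-/

open Matrix Kronecker

namespace Matrix

variable {K : Type*} [Field K]

theorem exists_isUnit_det_col_zero_eq {n : ℕ} {v : Fin (n + 1) → K} (hv : v ≠ 0) :
    ∃ W : Matrix (Fin (n + 1)) (Fin (n + 1)) K, IsUnit W.det ∧ W.col 0 = v := by
  obtain ⟨i₀, hi₀⟩ := Function.ne_iff.1 hv
  refine ⟨((1 : Matrix _ _ K).updateCol i₀ v).submatrix id (Equiv.swap 0 i₀), ?_, ?_⟩
  · have hdet : ((1 : Matrix _ _ K).updateCol i₀ v).det = v i₀ := by
      rw [← cramer_apply, cramer_one]; rfl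
    rw [det_permute', hdet]
    exact ((Equiv.Perm.sign _).isUnit.map (Int.castRingHom K)).mul (isUnit_iff_ne_zero.2 hi₀)
  · ext i
    simp

theorem exists_mul_eq_mul_col_zero_eq_single [IsAlgClosed K] {n : ℕ}
    (A : Matrix (Fin (n + 1)) (Fin (n + 1)) K) :
    ∃ (W B : Matrix (Fin (n + 1)) (Fin (n + 1)) K) (μ : K),
      IsUnit W.det ∧ A * W = W * B ∧ B.col 0 = Pi.single 0 μ := by
  obtain ⟨μ, hμ⟩ := Module.End.exists_eigenvalue (toLin' A)
  obtain ⟨v, hv⟩ := hμ.exists_hasEigenvector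
  obtain ⟨W, hW, hWv⟩ := exists_isUnit_det_col_zero_eq hv.2
  refine ⟨W, W⁻¹ * A * W, μ, hW,
    by rw [← Matrix.mul_assoc, mul_nonsing_inv_cancel_left _ _ hW], ?_⟩
  have hAv : A *ᵥ v = μ • v := by simpa using hv.apply_eq_smul
  rw [← mulVec_single_one, ← mulVec_mulVec, ← mulVec_mulVec, mulVec_single_one, hWv, hAv,
    mulVec_smul, ← hWv, ← mulVec_single_one, mulVec_mulVec, nonsing_inv_mul _ hW, one_mulVec]
  ext i
  simp [Pi.single_apply]

theorem exists_isUpperTriangular_of_col_zero_eq_single {n : ℕ}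
    {B : Matrix (Fin (n + 1)) (Fin (n + 1)) K} {μ : K} (hB : B.col 0 = Pi.single 0 μ)
    {U' T' : Matrix (Fin n) (Fin n) K} (hU' : IsUnit U'.det) (hT' : T'.IsUpperTriangular)
    (hBU' : B.submatrix Fin.succ Fin.succ * U' = U' * T') :
    ∃ U T : Matrix (Fin (n + 1)) (Fin (n + 1)) K,
      IsUnit U.det ∧ T.IsUpperTriangular ∧ B * U = U * T := by
  let e : Fin 1 ⊕ Fin n ≃ Fin (n + 1) := finSumFinEquiv.trans (finCongr (Nat.add_comm 1 n))
  have he : ∀ x, e x = Sum.elim (fun _ => 0) Fin.succ x := by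
    rintro (i | i) <;> ext <;> simp [e]
  set Bt := B.submatrix e e
  have hBt : Bt = fromBlocks Bt.toBlocks₁₁ Bt.toBlocks₁₂ 0 (B.submatrix Fin.succ Fin.succ) := by
    refine (fromBlocks_toBlocks Bt).symm.trans (congrArg₂ _ ?_ ?_)
    · ext i j
      simpa [Bt, toBlocks₂₁, he, Fin.succ_ne_zero] using congrFun hB i.succ
    · ext i j
      simp [Bt, toBlocks₂₂, he]
  let Ut := fromBlocks (1 : Matrix (Fin 1) (Fin 1) K) 0 0 U'
  let Tt := fromBlocks Bt.toBlocks₁₁ (Bt.toBlocks₁₂ * U') 0 T'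
  have hBUt : Bt * Ut = Ut * Tt := by
    rw [hBt, fromBlocks_multiply, fromBlocks_multiply]
    simp [hBU']
  refine ⟨Ut.submatrix e.symm e.symm, Tt.submatrix e.symm e.symm, ?_, ?_, ?_⟩
  · simpa [Ut, det_fromBlocks_zero₂₁] using hU'
  · rw [← reindex_apply, IsUpperTriangular, blockTriangular_reindex_iff]
    rintro (i | i) (j | j) hij <;> simp only [Function.comp_apply, id, he, Sum.elim_inl,
      Sum.elim_inr] at hij
    · exact absurd hij (lt_irrefl _)
    · exact absurd hij (Fin.not_lt_zero _)
    · rfl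
    · exact hT' (Fin.succ_lt_succ_iff.1 hij)
  · have hB' : B = Bt.submatrix e.symm e.symm := by simp [Bt]
    rw [hB', submatrix_mul_equiv, submatrix_mul_equiv, hBUt]

theorem exists_isUpperTriangular_mul_eq_mul [IsAlgClosed K] :
    ∀ {n : ℕ} (A : Matrix (Fin n) (Fin n) K),
      ∃ U T : Matrix (Fin n) (Fin n) K, IsUnit U.det ∧ T.IsUpperTriangular ∧ A * U = U * T
  | 0, A => ⟨1, A, by simp, fun i => i.elim0, by simp⟩
  | _ + 1, A => by
    obtain ⟨W, B, μ, hW, hAW, hB⟩ := exists_mul_eq_mul_col_zero_eq_single A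
    obtain ⟨U', T', hU', hT', hBU'⟩ :=
      exists_isUpperTriangular_mul_eq_mul (B.submatrix Fin.succ Fin.succ)
    obtain ⟨U, T, hU, hT, hBU⟩ := exists_isUpperTriangular_of_col_zero_eq_single hB hU' hT' hBU'
    refine ⟨W * U, T, by rw [det_mul]; exact hW.mul hU, hT, ?_⟩
    rw [← Matrix.mul_assoc, hAW, Matrix.mul_assoc, hBU, Matrix.mul_assoc]

theorem roots_charpoly_of_isUpperTriangular {ι : Type*} [Fintype ι] [DecidableEq ι]
    [LinearOrder ι] {T : Matrix ι ι K} (hT : T.IsUpperTriangular) :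
    T.charpoly.roots = Finset.univ.val.map T.diag := by
  rw [charpoly_of_isUpperTriangular T hT, Finset.prod_eq_multiset_prod,
    ← roots_multiset_prod_X_sub_C (Finset.univ.val.map T.diag), Multiset.map_map]
  rfl

theorem charpoly_eq_of_mul_eq_mul {ι : Type*} [Fintype ι] [DecidableEq ι] {A U T : Matrix ι ι K}
    (hU : IsUnit U.det) (h : A * U = U * T) : A.charpoly = T.charpoly := by
  rw [← nonsing_inv_mul_cancel_left U T hU, ← h, charpoly_mul_comm, Matrix.mul_assoc,
    mul_nonsing_inv _ hU, Matrix.mul_one]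

theorem roots_charpoly_of_det_sub_smul_one_eq_prod [Infinite K] {ι : Type*} [Fintype ι]
    [DecidableEq ι] {B : Matrix ι ι K} {f : ι → K}
    (h : ∀ μ : K, (B - μ • 1).det = ∏ i, (f i - μ)) :
    B.charpoly.roots = Finset.univ.val.map f := by
  have hB : B.charpoly = ∏ i, (X - C (f i)) := by
    refine Polynomial.funext fun μ => ?_
    rw [eval_charpoly, eval_prod, ← neg_sub, scalar_apply, ← smul_one_eq_diagonal, det_neg, h,
      ← Finset.card_univ, ← Finset.prod_neg]
    simp only [neg_sub, eval_sub, eval_X, eval_C]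
  rw [hB, Finset.prod_eq_multiset_prod, ← roots_multiset_prod_X_sub_C (Finset.univ.val.map f),
    Multiset.map_map]
  rfl

section KroneckerSum

variable {R : Type*} [CommRing R] {m ι : Type*} [Fintype m] [DecidableEq m] [Fintype ι]
  [DecidableEq ι]

theorem det_kronecker_one_add_one_kronecker_of_isUpperTriangular [LinearOrder ι]
    (A : Matrix m m R) {T : Matrix ι ι R} (hT : T.IsUpperTriangular) :
    (A ⊗ₖ (1 : Matrix ι ι R) + 1 ⊗ₖ T).det = ∏ i, (A + T i i • 1).det := by
  have htri : (A ⊗ₖ (1 : Matrix ι ι R) + 1 ⊗ₖ T).BlockTriangular Prod.snd := by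
    intro p r h
    simp [one_apply_ne (ne_of_gt h), hT h]
  rw [htri.det_fintype]
  refine Finset.prod_congr rfl fun i _ => ?_
  let e : m ≃ {p : m × ι // p.2 = i} :=
    ⟨fun a => ⟨(a, i), rfl⟩, fun p => p.1.1, fun _ => rfl,
      fun p => Subtype.ext (Prod.ext rfl p.2.symm)⟩
  rw [← det_submatrix_equiv_self e]
  congr 1
  ext a b
  by_cases hab : a = b <;> simp [e, toSquareBlock_def, one_apply, hab]

theorem det_kronecker_one_add_one_kronecker_of_mul_eq_mul {A : Matrix m m R}
    {B U T : Matrix ι ι R} (hU : IsUnit U.det) (h : B * U = U * T) :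
    (A ⊗ₖ (1 : Matrix ι ι R) + 1 ⊗ₖ B).det = (A ⊗ₖ (1 : Matrix ι ι R) + 1 ⊗ₖ T).det := by
  have hconj : (A ⊗ₖ (1 : Matrix ι ι R) + 1 ⊗ₖ B) * (1 ⊗ₖ U) =
      (1 ⊗ₖ U) * (A ⊗ₖ (1 : Matrix ι ι R) + 1 ⊗ₖ T) := by
    simp only [Matrix.add_mul, Matrix.mul_add, ← mul_kronecker_mul, Matrix.mul_one,
      Matrix.one_mul, h]
  have hdet : IsUnit ((1 : Matrix m m R) ⊗ₖ U).det := by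
    rw [det_kronecker, det_one, one_pow, one_mul]
    exact hU.pow _
  simpa [det_mul, mul_comm _ ((1 : Matrix m m R) ⊗ₖ U).det, hdet.mul_right_inj] using
    congrArg det hconj

end KroneckerSum

theorem det_kronecker_one_add_one_kronecker [IsAlgClosed K] {m : Type*} [Fintype m]
    [DecidableEq m] {n : ℕ} (A : Matrix m m K) (B : Matrix (Fin n) (Fin n) K) :
    (A ⊗ₖ (1 : Matrix (Fin n) (Fin n) K) + 1 ⊗ₖ B).det =
      (B.charpoly.roots.map fun μ => (A + μ • 1).det).prod := by
  obtain ⟨U, T, hU, hT, hBU⟩ := exists_isUpperTriangular_mul_eq_mul B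
  rw [det_kronecker_one_add_one_kronecker_of_mul_eq_mul hU hBU,
    det_kronecker_one_add_one_kronecker_of_isUpperTriangular A hT,
    charpoly_eq_of_mul_eq_mul hU hBU, roots_charpoly_of_isUpperTriangular hT, Multiset.map_map]
  rfl

end Matrix

theorem floqMat2_eq_kronecker {q₁ q₂ : ℕ} {V : ℤ × ℤ → ℂ} {V₁ V₂ : ℤ → ℂ}
    (hsep : ∀ n₁ n₂ : ℤ, V (n₁, n₂) = V₁ n₁ + V₂ n₂) (z₁ z₂ : ℂ) :
    floqMat2 q₁ q₂ V z₁ z₂ = floqMat q₁ V₁ z₁ ⊗ₖ 1 + 1 ⊗ₖ floqMat q₂ V₂ z₂ := by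
  ext ⟨i, k⟩ ⟨j, l⟩
  simp only [floqMat2, floqMat, Matrix.add_apply, kroneckerMap_apply, of_apply, one_apply,
    Prod.mk.injEq, hsep]
  split_ifs <;> simp_all; ring

theorem stmt_8_general (q₁ q₂ : ℕ)
    (V : ℤ × ℤ → ℂ) (V₁ V₂ : ℤ → ℂ)
    (hsep : ∀ n₁ n₂ : ℤ, V (n₁, n₂) = V₁ n₁ + V₂ n₂)
    (R : ℝ) (lam : Fin q₂ → ℂ → ℂ)
    (hbranch : ∀ z₂ : ℂ, R < ‖z₂‖ → ∀ mu : ℂ,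
      floqP q₂ V₂ (z₂ ^ q₂) mu = ∏ l : Fin q₂, (lam l z₂ - mu)) :
    ∀ z₁ : ℂ, z₁ ≠ 0 → ∀ z₂ : ℂ, R < ‖z₂‖ → ∀ lam₀ : ℂ,
      floqP2 q₁ q₂ V z₁ (z₂ ^ q₂) lam₀ =
        ∏ l : Fin q₂, floqP q₁ V₁ z₁ (lam₀ - lam l z₂) := by
  intro z₁ _ z₂ hz₂ lam₀
  have hroots : (floqMat q₂ V₂ (z₂ ^ q₂)).charpoly.roots = univ.val.map (lam · z₂) :=
    roots_charpoly_of_det_sub_smul_one_eq_prod (hbranch z₂ hz₂)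
  have hsplit : floqMat2 q₁ q₂ V z₁ (z₂ ^ q₂) - lam₀ • 1 =
      (floqMat q₁ V₁ z₁ - lam₀ • 1) ⊗ₖ 1 + 1 ⊗ₖ floqMat q₂ V₂ (z₂ ^ q₂) := by
    rw [floqMat2_eq_kronecker hsep, ← one_kronecker_one, sub_eq_add_neg _ (lam₀ • 1),
      add_kronecker, ← neg_smul, smul_kronecker, neg_smul]
    abel
  rw [floqP2, hsplit, det_kronecker_one_add_one_kronecker, hroots, Multiset.map_map,
    ← Finset.prod_eq_multiset_prod]
  simp only [floqP, Function.comp_apply, sub_smul, sub_add]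

/-- for a separable 2D potential V = V₁ ⊕ V₂, the 2D Floquet determinant
factors over the eigenvalue branches of D_{V₂}(z₂^{q₂}). -/
theorem stmt_8 (q₁ q₂ : ℕ) (hq₁ : 1 ≤ q₁) (hq₂ : 1 ≤ q₂) (hco : Nat.Coprime q₁ q₂)
    (V : ℤ × ℤ → ℂ) (V₁ V₂ : ℤ → ℂ)
    (hV₁ : ∀ n : ℤ, V₁ (n + q₁) = V₁ n) (hV₂ : ∀ n : ℤ, V₂ (n + q₂) = V₂ n)
    (hsep : ∀ n₁ n₂ : ℤ, V (n₁, n₂) = V₁ n₁ + V₂ n₂)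
    (R : ℝ) (hR : 0 < R) (lam : Fin q₂ → ℂ → ℂ)
    (hbranch : ∀ z₂ : ℂ, R < ‖z₂‖ → ∀ mu : ℂ,
      floqP q₂ V₂ (z₂ ^ q₂) mu = ∏ l : Fin q₂, (lam l z₂ - mu)) :
    ∀ z₁ : ℂ, z₁ ≠ 0 → ∀ z₂ : ℂ, R < ‖z₂‖ → ∀ lam₀ : ℂ,
      floqP2 q₁ q₂ V z₁ (z₂ ^ q₂) lam₀ =
        ∏ l : Fin q₂, floqP q₁ V₁ z₁ (lam₀ - lam l z₂) :=
  stmt_8_general q₁ q₂ V V₁ V₂ hsep R lam hbranch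
end
end

section
/- Let V: ℤ → ℂ be q-periodic. If V is Floquet isospectral to a constant potential c (i.e., det(D_V(z) − λI) = det(D_c(z) − λI) for all z ∈ ℂ\{0}, λ ∈ ℂ) and V is real-valued, then V is identically equal to c. -/
noncomputable section
open Complex Polynomial Finset

/-!
At `z = 1` isospectrality says that `A = D_V(1)` and `B = D_c(1)` have the same characteristic
polynomial, hence so do `A²` and `B²`, because `det(t² - A²) = det(t - A) det(t + A)` and every
complex number is a square. Now `A = B + diag w` with `w i = V (i + 1) - c`, and `B` has constant
diagonal, so equality of the traces of `A, B` gives `∑ w i = 0`, and equality of the traces of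
`A², B²` then gives `∑ w i ^ 2 = 0`. The first identity forces `c` to be real, so `w` is real and
vanishes.
-/

namespace Matrix

variable {n K : Type*} [Fintype n] [DecidableEq n]

theorem eval_charpoly_eq_neg_one_pow_mul_det [CommRing K] (M : Matrix n n K) (t : K) :
    M.charpoly.eval t = (-1) ^ Fintype.card n * (M - t • 1).det := by
  rw [eval_charpoly, ← det_neg, neg_sub, scalar_apply, smul_one_eq_diagonal]

theorem charpoly_eq_of_det_sub_smul_eq_s14 [CommRing K] [IsDomain K] [Infinite K]
    {A B : Matrix n n K} (h : ∀ t : K, (A - t • 1).det = (B - t • 1).det) :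
    A.charpoly = B.charpoly :=
  Polynomial.funext fun t => by
    rw [eval_charpoly_eq_neg_one_pow_mul_det, eval_charpoly_eq_neg_one_pow_mul_det, h]

theorem eval_charpoly_mul_self [CommRing K] (M : Matrix n n K) (t : K) :
    (M * M).charpoly.eval (t * t) =
      (-1) ^ Fintype.card n * M.charpoly.eval t * M.charpoly.eval (-t) := by
  have hfactor : scalar n (t * t) - M * M = (scalar n t - M) * -(scalar n (-t) - M) := by
    rw [neg_sub, map_neg, sub_neg_eq_add, map_mul, sub_mul, mul_add, mul_add,
      (scalar_commute t (Commute.all t) M).eq]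
    abel
  rw [eval_charpoly, eval_charpoly, eval_charpoly, hfactor, det_mul, det_neg]
  ring

theorem charpoly_mul_self_eq_of_charpoly_eq [Field K] [IsAlgClosed K] {A B : Matrix n n K}
    (h : A.charpoly = B.charpoly) : (A * A).charpoly = (B * B).charpoly :=
  Polynomial.funext fun s => by
    obtain ⟨t, rfl⟩ := IsAlgClosed.exists_eq_mul_self s
    rw [eval_charpoly_mul_self, eval_charpoly_mul_self, h]

theorem trace_add_diagonal_mul_self [CommRing K] (B : Matrix n n K) (w : n → K) :
    ((B + diagonal w) * (B + diagonal w)).trace =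
      (B * B).trace + 2 * ∑ i, B i i * w i + ∑ i, w i * w i := by
  have hcross : (B * diagonal w).trace = ∑ i, B i i * w i := by
    simp only [trace, diag, mul_diagonal]
  rw [add_mul, mul_add, mul_add, trace_add, trace_add, trace_add, trace_mul_comm (diagonal w) B,
    hcross, diagonal_mul_diagonal, trace_diagonal]
  ring

end Matrix

theorem Complex.eq_zero_of_sum_mul_self_eq_zero {ι : Type*} (s : Finset ι) {w : ι → ℂ}
    (hw : ∀ i ∈ s, (w i).im = 0) (h : ∑ i ∈ s, w i * w i = 0) : ∀ i ∈ s, w i = 0 := by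
  have hre : ∑ i ∈ s, (w i).re * (w i).re = 0 := by
    have hsum := congrArg Complex.re h
    rw [Complex.re_sum, Complex.zero_re] at hsum
    rw [← hsum]
    exact Finset.sum_congr rfl fun i hi => by simp [Complex.mul_re, hw i hi]
  intro i hi
  exact Complex.ext ((Finset.sum_mul_self_eq_zero_iff s _).mp hre i hi) (hw i hi)

theorem Function.Periodic.eq_const_of_forall_fin {α : Type*} {V : ℤ → α} {q : ℕ}
    (hV : Function.Periodic V q) (hq : 0 < q) {c : α}
    (h : ∀ i : Fin q, V ((i : ℕ) + 1) = c) (n : ℤ) : V n = c := by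
  obtain ⟨y, ⟨hy1, hy2⟩, hy⟩ := hV.exists_mem_Ico (by exact_mod_cast hq) n 1
  have hi := h ⟨(y - 1).toNat, by omega⟩
  rwa [Int.toNat_of_nonneg (by omega), sub_add_cancel, ← hy] at hi

theorem hop_self (q : ℕ) (z : ℂ) (i : Fin q) :
    hop q z i i = if q = 1 then z⁻¹ + z else 0 := by
  split_ifs with hq
  · subst hq
    simp [hop]
  · have hq' : ¬((i : ℕ) = 0 ∧ (i : ℕ) = q - 1) := by omega
    simp [hop, hq']

theorem floqMat_const_apply_self (q : ℕ) (c z : ℂ) (i : Fin q) :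
    floqMat q (fun _ => c) z i i = c + if q = 1 then z⁻¹ + z else 0 := by
  simp [floqMat, hop_self]

theorem floqMat_eq_add_diagonal (q : ℕ) (V : ℤ → ℂ) (z c : ℂ) :
    floqMat q V z =
      floqMat q (fun _ => c) z + Matrix.diagonal (fun i : Fin q => V ((i : ℕ) + 1) - c) := by
  ext i j
  by_cases hij : i = j
  · subst hij
    simp only [floqMat, Matrix.of_apply, ↓reduceIte, Matrix.add_apply, Matrix.diagonal_apply_eq]
    ring
  · simp [floqMat, hij]

/-- Ambarzumian-type theorem: a real-valued q-periodic potential that is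
Floquet isospectral to a constant potential c is identically equal to c. -/
theorem stmt_14 (q : ℕ) (hq : 1 ≤ q) (V : ℤ → ℂ) (hV : ∀ n : ℤ, V (n + q) = V n)
    (hreal : ∀ n : ℤ, (V n).im = 0) (c : ℂ)
    (hiso : ∀ z : ℂ, z ≠ 0 → ∀ lam : ℂ,
      floqP q V z lam = floqP q (fun _ => c) z lam) :
    ∀ n : ℤ, V n = c := by
  set B := floqMat q (fun _ => c) 1
  set w : Fin q → ℂ := fun i => V ((i : ℕ) + 1) - c with hw_def
  have hchar : (B + Matrix.diagonal w).charpoly = B.charpoly := by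
    rw [← floqMat_eq_add_diagonal]
    exact Matrix.charpoly_eq_of_det_sub_smul_eq_s14 (hiso 1 one_ne_zero)
  have hw_sum : ∑ i, w i = 0 := by
    have htrace := congrArg (fun p => -p.nextCoeff) hchar
    simpa only [← Matrix.trace_eq_neg_charpoly_nextCoeff, Matrix.trace_add,
      Matrix.trace_diagonal, add_eq_left] using htrace
  have hw_sq : ∑ i, w i * w i = 0 := by
    have htrace := congrArg (fun p => -p.nextCoeff)
      (Matrix.charpoly_mul_self_eq_of_charpoly_eq hchar)
    have hcross : ∑ i, B i i * w i = 0 := by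
      simp only [B, floqMat_const_apply_self, ← Finset.mul_sum, hw_sum, mul_zero]
    simp only [← Matrix.trace_eq_neg_charpoly_nextCoeff, Matrix.trace_add_diagonal_mul_self,
      hcross] at htrace
    linear_combination htrace
  have hc : c.im = 0 := by
    simpa [hw_def, Complex.im_sum, hreal, Nat.one_le_iff_ne_zero.mp hq]
      using congrArg Complex.im hw_sum
  have hw_im : ∀ i ∈ Finset.univ, (w i).im = 0 := fun i _ => by simp [hw_def, hreal, hc]
  have hw : ∀ i ∈ Finset.univ, w i = 0 := Complex.eq_zero_of_sum_mul_self_eq_zero _ hw_im hw_sq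
  exact Function.Periodic.eq_const_of_forall_fin hV hq
    fun i => sub_eq_zero.mp (hw i (Finset.mem_univ i))
end
end
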